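/- Let G be a finite simple graph and let p : V → ℝ be arbitrary. Write P = 2^{−|V|} • ∏_{u ∈ V} (1 + K_u) (the cluster-state projector) and, for S ⊆ V, Z_S = ∏_{u ∈ S} Z_u. Then the mixture of independent local Z-errors applied to P reproduces a product form: ∑_{S ⊆ V} (∏_{u ∈ S} p(u)) (∏_{u ∉ S} (1 − p(u))) • Z_S * P * Z_S = 2^{−|V|} • ∏_{u ∈ V} (1 + (1 − 2 p(u)) • K_u). In particular, for constant p the thermal cluster state 2^{−|V|} ∏_u (1 + (1−2p) K_u) is obtained from the pure cluster state by flipping each qubit with Z independently with probability p. -/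

import Mathlib

open Matrix

set_option linter.unusedSectionVars false

noncomputable section

namespace ClusterState


/-- The single-qubit Pauli `X` matrix. -/
def PX : Matrix (Fin 2) (Fin 2) ℂ := !![0, 1; 1, 0]

/-- The single-qubit Pauli `Z` matrix. -/
def PZ : Matrix (Fin 2) (Fin 2) ℂ := !![1, 0; 0, -1]

variable {V : Type*} [Fintype V] [DecidableEq V]

/-- The one-qubit operator `M` acting on the tensor factor `u` of the
`|V|`-qubit space `(V → Fin 2)`, and the identity on all other factors. -/
def oneSite (u : V) (M : Matrix (Fin 2) (Fin 2) ℂ) :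
    Matrix (V → Fin 2) (V → Fin 2) ℂ :=
  Matrix.of fun s t => if ∀ v, v ≠ u → s v = t v then M (s u) (t u) else 0

/-- Pauli `X` acting on tensor factor `u`. -/
def XAt (u : V) : Matrix (V → Fin 2) (V → Fin 2) ℂ := oneSite u PX

/-- Pauli `Z` acting on tensor factor `u`. -/
def ZAt (u : V) : Matrix (V → Fin 2) (V → Fin 2) ℂ := oneSite u PZ

lemma fin2_cases : ∀ a : Fin 2, a = 0 ∨ a = 1 := by decide

lemma ZAt_eq_diagonal (u : V) :
    ZAt u = Matrix.diagonal fun s => if s u = 1 then (-1 : ℂ) else 1 := by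
  funext s t
  simp only [ZAt, oneSite, Matrix.of_apply]
  by_cases hst : s = t
  · subst hst
    rw [Matrix.diagonal_apply_eq, if_pos fun v _ => rfl]
    rcases fin2_cases (s u) with h | h <;> rw [h] <;> norm_num [PZ]
  · rw [Matrix.diagonal_apply_ne _ hst]
    by_cases h : ∀ v, v ≠ u → s v = t v
    · rw [if_pos h]
      have hsu : s u ≠ t u := by
        intro he
        exact hst (funext fun v => by
          by_cases hv : v = u
          · rw [hv]; exact he
          · exact h v hv)
      rcases fin2_cases (s u) with h1 | h1 <;> rcases fin2_cases (t u) with h2 | h2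
      · exact absurd (h1.trans h2.symm) hsu
      · rw [h1, h2]; norm_num [PZ]
      · rw [h1, h2]; norm_num [PZ]
      · exact absurd (h1.trans h2.symm) hsu
    · rw [if_neg h]

lemma ZAt_commute (u w : V) : Commute (ZAt u) (ZAt w) := by
  have : ZAt u * ZAt w = ZAt w * ZAt u := by
    rw [ZAt_eq_diagonal, ZAt_eq_diagonal, Matrix.diagonal_mul_diagonal,
      Matrix.diagonal_mul_diagonal]
    exact congrArg Matrix.diagonal (mul_comm _ _)
  exact this

/-- The product `∏_{u ∈ S} Z_u` of Pauli `Z` operators over a finite set of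
sites (all factors commute). -/
def Zprod (S : Finset V) : Matrix (V → Fin 2) (V → Fin 2) ℂ :=
  S.noncommProd ZAt fun u _ w _ _ => ZAt_commute u w

/-- Flip the bit at site `u`. -/
def flip (u : V) (s : V → Fin 2) : V → Fin 2 := Function.update s u (s u + 1)

lemma flip_apply_same (u : V) (s : V → Fin 2) : flip u s u = s u + 1 := by
  unfold flip; exact Function.update_self u (s u + 1) s

lemma flip_apply_ne (u v : V) (s : V → Fin 2) (h : v ≠ u) : flip u s v = s v := by
  unfold flip; exact Function.update_of_ne h (s u + 1) s

lemma XAt_apply (u : V) (s t : V → Fin 2) :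
    XAt u s t = if t = flip u s then 1 else 0 := by
  simp only [XAt, oneSite, Matrix.of_apply]
  by_cases ht : t = flip u s
  · have hcond : ∀ v, v ≠ u → s v = t v := fun v hv => by
      rw [ht, flip_apply_ne u v s hv]
    rw [if_pos hcond, if_pos ht, ht, flip_apply_same]
    rcases fin2_cases (s u) with h | h <;> rw [h]
    · have e : (0 : Fin 2) + 1 = 1 := rfl
      rw [e]; norm_num [PX]
    · have e : (1 : Fin 2) + 1 = 0 := rfl
      rw [e]; norm_num [PX]
  · rw [if_neg ht]
    by_cases h : ∀ v, v ≠ u → s v = t v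
    · rw [if_pos h]
      have htu : t u ≠ s u + 1 := by
        intro he
        apply ht
        funext v
        by_cases hv : v = u
        · rw [hv, he, flip_apply_same]
        · rw [flip_apply_ne u v s hv]; exact (h v hv).symm
      have hts : t u = s u := by
        have key : ∀ a b : Fin 2, b ≠ a + 1 → b = a := by decide
        exact key (s u) (t u) htu
      rw [hts]
      rcases fin2_cases (s u) with h1 | h1 <;> rw [h1] <;> norm_num [PX]
    · rw [if_neg h]

lemma XAt_mul_apply (u : V) (A : Matrix (V → Fin 2) (V → Fin 2) ℂ)
    (s t : V → Fin 2) : (XAt u * A) s t = A (flip u s) t := by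
  rw [Matrix.mul_apply, Finset.sum_eq_single (flip u s)]
  · rw [XAt_apply, if_pos rfl, one_mul]
  · intro r _ hr
    rw [XAt_apply, if_neg hr, zero_mul]
  · intro h; exact absurd (Finset.mem_univ _) h

lemma flip_flip (u : V) (s : V → Fin 2) : flip u (flip u s) = s := by
  funext v
  by_cases hv : v = u
  · rw [hv, flip_apply_same, flip_apply_same]
    have key : ∀ a : Fin 2, a + 1 + 1 = a := by decide
    exact key (s u)
  · rw [flip_apply_ne _ _ _ hv, flip_apply_ne _ _ _ hv]

lemma mul_XAt_apply (u : V) (A : Matrix (V → Fin 2) (V → Fin 2) ℂ)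
    (s t : V → Fin 2) : (A * XAt u) s t = A s (flip u t) := by
  rw [Matrix.mul_apply, Finset.sum_eq_single (flip u t)]
  · rw [XAt_apply, if_pos (flip_flip u t).symm, mul_one]
  · intro r _ hr
    rw [XAt_apply, if_neg, mul_zero]
    intro he
    exact hr (by rw [he, flip_flip])
  · intro h; exact absurd (Finset.mem_univ _) h

lemma flip_comm (u w : V) (s : V → Fin 2) :
    flip u (flip w s) = flip w (flip u s) := by
  rcases eq_or_ne u w with rfl | h
  · rfl
  · funext v
    by_cases hu : v = u
    · rw [hu, flip_apply_same, flip_apply_ne w u s h,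
        flip_apply_ne w u (flip u s) h, flip_apply_same]
    · by_cases hw : v = w
      · rw [hw, flip_apply_ne u w (flip w s) (Ne.symm h), flip_apply_same,
          flip_apply_same, flip_apply_ne u w s (Ne.symm h)]
      · rw [flip_apply_ne u v (flip w s) hu, flip_apply_ne w v s hw,
          flip_apply_ne w v (flip u s) hw, flip_apply_ne u v s hu]

lemma XAt_commute (u w : V) : Commute (XAt u) (XAt w) := by
  have : XAt u * XAt w = XAt w * XAt u := by
    funext s t
    rw [XAt_mul_apply, XAt_mul_apply, XAt_apply, XAt_apply, flip_comm w u s]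
  exact this

/-- The product `∏_{u ∈ S} X_u` of Pauli `X` operators over a finite set of
sites (all factors commute). -/
def Xprod (S : Finset V) : Matrix (V → Fin 2) (V → Fin 2) ℂ :=
  S.noncommProd XAt fun u _ w _ _ => XAt_commute u w

/-- The cluster-state stabilizer operator `K_u = X_u * ∏_{v ∈ N(u)} Z_v`. -/
def K (G : SimpleGraph V) [DecidableRel G.Adj] (u : V) :
    Matrix (V → Fin 2) (V → Fin 2) ℂ :=
  XAt u * Zprod (G.neighborFinset u)

/-- Product of a family of pairwise commuting elements over a finite set. -/
def cprod {α M : Type*} [Monoid M] (S : Finset α) (f : α → M)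
    (h : ∀ u ∈ S, ∀ w ∈ S, Commute (f u) (f w)) : M :=
  S.noncommProd f fun u hu w hw _ => h u hu w hw

/-!
Conjugation by `Z_S` fixes every `Z_v` and changes the sign of `X_u` exactly when `u ∈ S`, so it
sends `1 + K_u` to `1 - K_u` for `u ∈ S` and leaves it alone otherwise. The `K_u` commute, so the
computation takes place in a commutative algebra, where expanding every factor
`1 + (1 - 2p) K = p (1 - K) + (1 - p) (1 + K)` of the right-hand side over the subsets `S` of `V`
produces exactly the weighted sum of the conjugates.
-/

section Algebra

variable {R A : Type*}

theorem _root_.Commute.of_one_add [Ring A] {a b : A} (h : Commute (1 + a) (1 + b)) :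
    Commute a b := by
  simpa using (h.sub_left (Commute.one_left _)).sub_right (Commute.one_right _)

theorem _root_.Commute.one_add_smul [CommSemiring R] [Semiring A] [Algebra R A] {a b : A}
    (h : Commute a b) (c d : R) : Commute (1 + c • a) (1 + d • b) :=
  (Commute.one_left _).add_left ((Commute.one_right _).add_right ((h.smul_left c).smul_right d))

theorem map_cprod {α M N F : Type*} [Monoid M] [Monoid N] [FunLike F M N] [MonoidHomClass F M N]
    (g : F) (S : Finset α) (f : α → M) (h : ∀ u ∈ S, ∀ w ∈ S, Commute (f u) (f w)) :
    g (cprod S f h) = cprod S (fun u => g (f u)) fun u hu w hw => (h u hu w hw).map g :=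
  Finset.map_noncommProd _ _ _ _

theorem cprod_congr {α M : Type*} [Monoid M] {S : Finset α} {f g : α → M}
    (hfg : ∀ u ∈ S, f u = g u) (hf : ∀ u ∈ S, ∀ w ∈ S, Commute (f u) (f w))
    (hg : ∀ u ∈ S, ∀ w ∈ S, Commute (g u) (g w)) : cprod S f hf = cprod S g hg :=
  Finset.noncommProd_congr rfl hfg _

variable {ι : Type*} [Fintype ι] [DecidableEq ι]

theorem sum_smul_prod_one_add_sign_smul [CommRing R] [CommRing A] [Algebra R A]
    (k : ι → A) (q : ι → R) :
    ∑ S : Finset ι, ((∏ u ∈ S, q u) * ∏ u ∈ Sᶜ, (1 - q u)) •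
        ∏ u, (1 + (if u ∈ S then -1 else 1 : R) • k u)
      = ∏ u, (1 + (1 - 2 * q u) • k u) := by
  have hfactor (u : ι) : 1 + (1 - 2 * q u) • k u = q u • (1 - k u) + (1 - q u) • (1 + k u) := by
    module
  rw [Finset.prod_congr rfl fun u _ => hfactor u, Fintype.prod_add]
  refine Finset.sum_congr rfl fun S _ => ?_
  rw [Finset.prod_smul, Finset.prod_smul, smul_mul_smul_comm,
    ← Finset.prod_mul_prod_compl S (fun u => 1 + (if u ∈ S then -1 else 1 : R) • k u)]
  congr 2 <;> refine Finset.prod_congr rfl fun u hu => ?_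
  · simp [hu, sub_eq_add_neg]
  · simp [Finset.mem_compl.mp hu]

open scoped IsMulCommutative in
theorem sum_smul_cprod_one_add_sign_smul [CommRing R] [Ring A] [Algebra R A]
    (k : ι → A) (hk : ∀ u w, Commute (k u) (k w)) (q : ι → R) :
    ∑ S : Finset ι, ((∏ u ∈ S, q u) * ∏ u ∈ Sᶜ, (1 - q u)) •
        cprod Finset.univ (fun u => 1 + (if u ∈ S then -1 else 1 : R) • k u)
          (fun u _ w _ => (hk u w).one_add_smul _ _)
      = cprod Finset.univ (fun u => 1 + (1 - 2 * q u) • k u)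
          (fun u _ w _ => (hk u w).one_add_smul _ _) := by
  let B := Algebra.adjoin R (Set.range k)
  have : IsMulCommutative B := Algebra.isMulCommutative_adjoin R <| by
    rintro _ ⟨u, rfl⟩ _ ⟨w, rfl⟩
    exact hk u w
  let kB (u : ι) : B := ⟨k u, Algebra.subset_adjoin ⟨u, rfl⟩⟩
  -- every `cprod` in the statement is the image of a commutative product in `B`
  have cprod_eq (c : ι → R) :
      cprod Finset.univ (fun u => 1 + c u • k u) (fun u _ w _ => (hk u w).one_add_smul _ _)
        = B.val (∏ u, (1 + c u • kB u)) := by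
    rw [← Finset.noncommProd_eq_prod]
    exact (cprod_congr (fun u _ => by simp [kB]) _ _).trans
      (map_cprod B.val _ _ fun _ _ _ _ => Commute.all _ _).symm
  simp only [cprod_eq, ← map_smul, ← map_sum]
  rw [sum_smul_prod_one_add_sign_smul]

end Algebra

def zSign (S : Finset V) (s : V → Fin 2) : ℂ :=
  ∏ u ∈ S, if s u = 1 then -1 else 1

lemma Zprod_eq_diagonal (S : Finset V) : Zprod S = diagonal (zSign S) := by
  let d (u : V) (s : V → Fin 2) : ℂ := if s u = 1 then -1 else 1
  calc Zprod S = S.noncommProd (fun u => diagonalRingHom (V → Fin 2) ℂ (d u))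
        fun _ _ _ _ _ => (Commute.all _ _).map _ :=
      Finset.noncommProd_congr rfl (fun u _ => ZAt_eq_diagonal u) _
    _ = diagonalRingHom (V → Fin 2) ℂ (∏ u ∈ S, d u) := by
      rw [← Finset.noncommProd_eq_prod]
      exact (Finset.map_noncommProd _ _ _ _).symm
    _ = diagonal (zSign S) :=
      congr_arg diagonal (funext fun s => Finset.prod_apply s S d)

lemma zSign_mul_self (S : Finset V) (s : V → Fin 2) : zSign S s * zSign S s = 1 := by
  rw [zSign, ← Finset.prod_mul_distrib]
  exact Finset.prod_eq_one fun u _ => by split_ifs <;> norm_num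

lemma zSign_flip (S : Finset V) (u : V) (s : V → Fin 2) :
    zSign S (flip u s) = if u ∈ S then -zSign S s else zSign S s := by
  by_cases hu : u ∈ S
  · have hrest : ∏ w ∈ S.erase u, (if flip u s w = 1 then (-1 : ℂ) else 1)
        = ∏ w ∈ S.erase u, (if s w = 1 then (-1 : ℂ) else 1) :=
      Finset.prod_congr rfl fun w hw => by rw [flip_apply_ne u w s (Finset.ne_of_mem_erase hw)]
    rw [if_pos hu, zSign, zSign, ← Finset.mul_prod_erase S _ hu, ← Finset.mul_prod_erase S _ hu,
      hrest, flip_apply_same]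
    rcases fin2_cases (s u) with h | h <;> simp [h]
  · rw [if_neg hu]
    exact Finset.prod_congr rfl fun w hw => by rw [flip_apply_ne u w s (ne_of_mem_of_not_mem hw hu)]

lemma Zprod_mul_self (S : Finset V) : Zprod S * Zprod S = 1 := by
  rw [Zprod_eq_diagonal, diagonal_mul_diagonal]
  simp_rw [zSign_mul_self, diagonal_one]

lemma Zprod_commute (S T : Finset V) : Commute (Zprod S) (Zprod T) := by
  rw [Zprod_eq_diagonal, Zprod_eq_diagonal]
  exact (Commute.all _ _).map (diagonalRingHom (V → Fin 2) ℂ)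

def zUnit (S : Finset V) : (Matrix (V → Fin 2) (V → Fin 2) ℂ)ˣ :=
  ⟨Zprod S, Zprod S, Zprod_mul_self S, Zprod_mul_self S⟩

def conjZ (S : Finset V) :
    Matrix (V → Fin 2) (V → Fin 2) ℂ →+* Matrix (V → Fin 2) (V → Fin 2) ℂ :=
  MulSemiringAction.toRingHom _ _ (ConjAct.toConjAct (zUnit S))

lemma conjZ_apply (S : Finset V) (A : Matrix (V → Fin 2) (V → Fin 2) ℂ) :
    conjZ S A = Zprod S * A * Zprod S :=
  ConjAct.units_smul_def _ _

lemma conjZ_XAt (S : Finset V) (u : V) :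
    conjZ S (XAt u) = if u ∈ S then -XAt u else XAt u := by
  ext s t
  rw [conjZ_apply, Zprod_eq_diagonal, mul_diagonal, diagonal_mul, XAt_apply]
  by_cases ht : t = flip u s
  · rw [ht, if_pos rfl, zSign_flip]
    split_ifs <;> simp [XAt_apply, zSign_mul_self]
  · split_ifs <;> simp [XAt_apply, ht]

lemma conjZ_Zprod (S T : Finset V) : conjZ S (Zprod T) = Zprod T := by
  rw [conjZ_apply, (Zprod_commute S T).eq, mul_assoc, Zprod_mul_self, mul_one]

lemma conjZ_K (G : SimpleGraph V) [DecidableRel G.Adj] (S : Finset V) (u : V) :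
    conjZ S (K G u) = if u ∈ S then -K G u else K G u := by
  rw [K, map_mul, conjZ_XAt, conjZ_Zprod]
  split_ifs <;> simp

lemma conjZ_one_add_K (G : SimpleGraph V) [DecidableRel G.Adj] (S : Finset V) (u : V) :
    conjZ S (1 + K G u) = 1 + (if u ∈ S then -1 else 1 : ℝ) • K G u := by
  rw [map_add, map_one, conjZ_K]
  split_ifs <;> simp

/-- applying independent local `Z`-errors with probabilities `p(u)`
to the cluster-state projector `P = 2^{−|V|} ∏_u (1 + K_u)` yields
`2^{−|V|} ∏_u (1 + (1 − 2 p(u)) K_u)`. -/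
theorem local_Z_errors_on_cluster_state
    {V : Type*} [Fintype V] [DecidableEq V]
    (G : SimpleGraph V) [DecidableRel G.Adj] (p : V → ℝ)
    (h1 : ∀ u w : V,
      Commute ((1 : Matrix (V → Fin 2) (V → Fin 2) ℂ) + K G u) (1 + K G w))
    (h2 : ∀ u w : V,
      Commute ((1 : Matrix (V → Fin 2) (V → Fin 2) ℂ) + (1 - 2 * p u) • K G u)
        (1 + (1 - 2 * p w) • K G w))
    (P : Matrix (V → Fin 2) (V → Fin 2) ℂ)
    (hP : P = ((2 : ℂ) ^ Fintype.card V)⁻¹ •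
      cprod Finset.univ (fun u => 1 + K G u) (fun u _ w _ => h1 u w)) :
    ∑ S : Finset V, ((∏ u ∈ S, p u) * ∏ u ∈ Sᶜ, (1 - p u)) • (Zprod S * P * Zprod S)
      = ((2 : ℂ) ^ Fintype.card V)⁻¹ •
          cprod Finset.univ (fun u => 1 + (1 - 2 * p u) • K G u)
            (fun u _ w _ => h2 u w) := by
  have hK (u w : V) : Commute (K G u) (K G w) := (h1 u w).of_one_add
  have hconj (S : Finset V) : Zprod S * P * Zprod S = ((2 : ℂ) ^ Fintype.card V)⁻¹ •
      cprod Finset.univ (fun u => 1 + (if u ∈ S then -1 else 1 : ℝ) • K G u)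
        (fun u _ w _ => (hK u w).one_add_smul _ _) := by
    rw [hP, mul_smul_comm, smul_mul_assoc, ← conjZ_apply, map_cprod]
    exact congr_arg _ (cprod_congr (fun u _ => conjZ_one_add_K G S u) _ _)
  simp_rw [hconj, smul_comm _ ((2 : ℂ) ^ Fintype.card V)⁻¹, ← Finset.smul_sum]
  rw [sum_smul_cprod_one_add_sign_smul (K G) hK p]

end ClusterState
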